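/- arXiv:2411.00163 — 2 statements merged into one kernel-verified Lean document; each statement's English description precedes it below -/
import Mathlib

section
/- Let X be a finite nonempty set, P the uniform distribution on X, ℓ : X → ℝ, and τ > 0. Define F(μ) = (∑_{x∈X} P(x)·τ·e^{(ℓ(x) − μ)/τ − 1}) + μ. Then F is minimized at μ* = τ·log(∑_{x∈X} P(x)·e^{ℓ(x)/τ}) − τ, with minimum value τ·log(∑_{x∈X} P(x)·e^{ℓ(x)/τ}). -/
theorem dro_dual_optimal_mu {α : Type*} (X : Finset α) (hX : X.Nonempty)
    (ℓ : α → ℝ) (τ : ℝ) (hτ : 0 < τ) :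
    let F : ℝ → ℝ := fun μ =>
      (∑ x ∈ X, ((X.card : ℝ))⁻¹ * (τ * Real.exp ((ℓ x - μ) / τ - 1))) + μ
    let μstar : ℝ := τ * Real.log (∑ x ∈ X, ((X.card : ℝ))⁻¹ * Real.exp (ℓ x / τ)) - τ
    (∀ μ : ℝ, F μstar ≤ F μ) ∧
    F μstar = τ * Real.log (∑ x ∈ X, ((X.card : ℝ))⁻¹ * Real.exp (ℓ x / τ)) := by
  intro F μstar
  set S : ℝ := ∑ x ∈ X, ((X.card : ℝ))⁻¹ * Real.exp (ℓ x / τ) with hS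
  have hcard : (0 : ℝ) < (X.card : ℝ) := by
    exact_mod_cast Finset.card_pos.mpr hX
  have hSpos : 0 < S := by
    apply Finset.sum_pos
    · intro x _
      exact mul_pos (inv_pos.mpr hcard) (Real.exp_pos _)
    · exact hX
  -- rewrite F
  have hF : ∀ μ : ℝ, F μ = τ * (S * Real.exp (-μ / τ - 1)) + μ := by
    intro μ
    simp only [F]
    congr 1
    have h : τ * (S * Real.exp (-μ / τ - 1)) =
        ∑ x ∈ X, ((X.card : ℝ))⁻¹ * (τ * (Real.exp (ℓ x / τ) * Real.exp (-μ / τ - 1))) := by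
      rw [hS, Finset.sum_mul, Finset.mul_sum]
      apply Finset.sum_congr rfl
      intro x _
      ring
    rw [h]
    apply Finset.sum_congr rfl
    intro x _
    rw [← Real.exp_add]
    congr 2
    rw [sub_div]
    ring
  have hexp_mustar : Real.exp (-μstar / τ - 1) = S⁻¹ := by
    have : -μstar / τ - 1 = -Real.log S := by
      simp only [μstar, ← hS]
      field_simp
      ring
    rw [this, Real.exp_neg, Real.exp_log hSpos]
  constructor
  · intro μ
    rw [hF, hF, hexp_mustar, mul_inv_cancel₀ (ne_of_gt hSpos)]
    have key : Real.log S - μ / τ ≤ S * Real.exp (-μ / τ - 1) := by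
      have h1 : Real.log S - μ / τ - 1 + 1 ≤ Real.exp (Real.log S - μ / τ - 1) :=
        Real.add_one_le_exp _
      have h2 : Real.exp (Real.log S - μ / τ - 1) = S * Real.exp (-μ / τ - 1) := by
        rw [show Real.log S - μ / τ - 1 = Real.log S + (-μ / τ - 1) by ring,
          Real.exp_add, Real.exp_log hSpos]
      linarith
    have h2 := mul_le_mul_of_nonneg_left key (le_of_lt hτ)
    have hμ : τ * (μ / τ) = μ := by field_simp
    have h3 : τ * Real.log S - τ * (μ / τ) ≤ τ * (S * Real.exp (-μ / τ - 1)) := by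
      nlinarith [h2]
    simp only [μstar, ← hS]
    linarith [h3, hμ]
  · rw [hF, hexp_mustar, mul_inv_cancel₀ (ne_of_gt hSpos)]
    simp only [μstar, ← hS]
    ring
end

section
/- Let X be a finite set, P the uniform distribution on X, ℓ : X → ℝ, and η > 0. Then sup over probability distributions Q on X with D_KL(Q‖P) ≤ η of E_Q[ℓ] equals inf over τ > 0 of τ·log E_P[e^{ℓ/τ}] + τ·η. -/
open Real Finset

lemma gibbs_ineq {α : Type*} (X : Finset α) (hX : X.Nonempty) (ℓ : α → ℝ)
    (Q : α → ℝ) (hQ0 : ∀ x ∈ X, 0 ≤ Q x) (hQ1 : ∑ x ∈ X, Q x = 1) (β : ℝ) :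
    β * ∑ x ∈ X, Q x * ℓ x ≤
      (∑ x ∈ X, Q x * Real.log (Q x / ((X.card : ℝ))⁻¹)) +
      Real.log (∑ x ∈ X, ((X.card : ℝ))⁻¹ * Real.exp (β * ℓ x)) := by
  set n : ℝ := (X.card : ℝ) with hn_def
  have hn : 0 < n := by rw [hn_def]; exact_mod_cast Finset.card_pos.mpr hX
  set W : ℝ := ∑ x ∈ X, n⁻¹ * Real.exp (β * ℓ x) with hW_def
  have hW : 0 < W := Finset.sum_pos (fun x _ => by positivity) hX
  have key : ∀ x ∈ X, Q x * (β * ℓ x) ≤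
      Q x * Real.log (Q x / n⁻¹) + Q x * Real.log W +
        (n⁻¹ * Real.exp (β * ℓ x) / W - Q x) := by
    intro x hx
    rcases eq_or_lt_of_le (hQ0 x hx) with h | h
    · rw [← h]
      simp only [zero_mul, zero_add, add_zero, sub_zero]
      positivity
    · have hy : (0:ℝ) < n⁻¹ * Real.exp (β * ℓ x) / (Q x * W) := by positivity
      have hlog := Real.log_le_sub_one_of_pos hy
      have h1 : Q x * Real.log (n⁻¹ * Real.exp (β * ℓ x) / (Q x * W)) ≤
          n⁻¹ * Real.exp (β * ℓ x) / W - Q x := by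
        have h2 := mul_le_mul_of_nonneg_left hlog h.le
        have h3 : Q x * (n⁻¹ * Real.exp (β * ℓ x) / (Q x * W) - 1)
            = n⁻¹ * Real.exp (β * ℓ x) / W - Q x := by
          field_simp
        linarith [h2, h3.le]
      have hexp : Real.log (n⁻¹ * Real.exp (β * ℓ x) / (Q x * W)) =
          -Real.log n + β * ℓ x - Real.log (Q x) - Real.log W := by
        rw [Real.log_div (by positivity) (by positivity),
          Real.log_mul (by positivity) (Real.exp_pos _).ne',
          Real.log_mul h.ne' hW.ne', Real.log_inv, Real.log_exp]
        ring
      have hq : Real.log (Q x / n⁻¹) = Real.log (Q x) + Real.log n := by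
        rw [Real.log_div h.ne' (by positivity), Real.log_inv]
        ring
      rw [hexp] at h1
      rw [hq]
      nlinarith [h1]
  have hsum := Finset.sum_le_sum key
  have e1 : ∑ x ∈ X, Q x * (β * ℓ x) = β * ∑ x ∈ X, Q x * ℓ x := by
    rw [Finset.mul_sum]; exact Finset.sum_congr rfl (fun x _ => by ring)
  have e2 : ∑ x ∈ X, (Q x * Real.log (Q x / n⁻¹) + Q x * Real.log W +
      (n⁻¹ * Real.exp (β * ℓ x) / W - Q x)) =
      (∑ x ∈ X, Q x * Real.log (Q x / n⁻¹)) + Real.log W := by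
    rw [Finset.sum_add_distrib, Finset.sum_add_distrib, Finset.sum_sub_distrib,
      ← Finset.sum_mul, hQ1, ← Finset.sum_div, ← hW_def, div_self hW.ne']
    ring
  rw [e1, e2] at hsum
  exact hsum


lemma entropy_nonneg {α : Type*} (X : Finset α) (hX : X.Nonempty)
    (Q : α → ℝ) (hQ0 : ∀ x ∈ X, 0 < Q x) (hQ1 : ∑ x ∈ X, Q x = 1) :
    0 ≤ ∑ x ∈ X, Q x * Real.log (Q x / ((X.card : ℝ))⁻¹) := by
  set n : ℝ := (X.card : ℝ) with hn_def
  have hn : 0 < n := by rw [hn_def]; exact_mod_cast Finset.card_pos.mpr hX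
  have key : ∀ x ∈ X, Q x - n⁻¹ ≤ Q x * Real.log (Q x / n⁻¹) := by
    intro x hx
    have h := hQ0 x hx
    have hy : (0:ℝ) < n⁻¹ / Q x := by positivity
    have hlog := Real.log_le_sub_one_of_pos hy
    have hrev : Real.log (n⁻¹ / Q x) = - Real.log (Q x / n⁻¹) := by
      rw [← Real.log_inv]
      congr 1
      field_simp
    rw [hrev] at hlog
    have h2 := mul_le_mul_of_nonneg_left hlog h.le
    have h3 : Q x * (n⁻¹ / Q x - 1) = n⁻¹ - Q x := by
      field_simp
    nlinarith
  have hsum := Finset.sum_le_sum key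
  rw [Finset.sum_sub_distrib, hQ1, Finset.sum_const, nsmul_eq_mul] at hsum
  have : (X.card : ℝ) * n⁻¹ = 1 := by
    rw [← hn_def]; exact mul_inv_cancel₀ hn.ne'
  rw [this] at hsum
  linarith

noncomputable def Zf {α : Type*} (X : Finset α) (ℓ : α → ℝ) (β : ℝ) : ℝ :=
  ∑ x ∈ X, Real.exp (β * ℓ x)

noncomputable def qf {α : Type*} (X : Finset α) (ℓ : α → ℝ) (β : ℝ) (x : α) : ℝ :=
  Real.exp (β * ℓ x) / Zf X ℓ β

noncomputable def Hf {α : Type*} (X : Finset α) (ℓ : α → ℝ) (β : ℝ) : ℝ :=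
  ∑ x ∈ X, qf X ℓ β x * Real.log (qf X ℓ β x / ((X.card : ℝ))⁻¹)

lemma Zf_pos {α : Type*} (X : Finset α) (hX : X.Nonempty) (ℓ : α → ℝ) (β : ℝ) :
    0 < Zf X ℓ β :=
  Finset.sum_pos (fun x _ => Real.exp_pos _) hX

lemma qf_pos {α : Type*} (X : Finset α) (hX : X.Nonempty) (ℓ : α → ℝ) (β : ℝ) (x : α) :
    0 < qf X ℓ β x :=
  div_pos (Real.exp_pos _) (Zf_pos X hX ℓ β)

lemma qf_sum {α : Type*} (X : Finset α) (hX : X.Nonempty) (ℓ : α → ℝ) (β : ℝ) :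
    ∑ x ∈ X, qf X ℓ β x = 1 := by
  simp only [qf]
  rw [← Finset.sum_div]
  show Zf X ℓ β / Zf X ℓ β = 1
  exact div_self (Zf_pos X hX ℓ β).ne'

lemma Hf_cont {α : Type*} (X : Finset α) (hX : X.Nonempty) (ℓ : α → ℝ) :
    Continuous (Hf X ℓ) := by
  have hn : (0:ℝ) < (X.card : ℝ) := by exact_mod_cast Finset.card_pos.mpr hX
  have hZc : Continuous (Zf X ℓ) := by
    apply continuous_finset_sum
    intro x _
    exact Real.continuous_exp.comp (continuous_id.mul continuous_const)
  apply continuous_finset_sum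
  intro x _
  have hqc : Continuous (fun β => qf X ℓ β x) :=
    (Real.continuous_exp.comp (continuous_id.mul continuous_const)).div hZc
      (fun β => (Zf_pos X hX ℓ β).ne')
  exact hqc.mul ((hqc.div_const _).log
    (fun β => (div_pos (qf_pos X hX ℓ β x) (inv_pos.mpr hn)).ne'))

lemma Hf_zero {α : Type*} (X : Finset α) (hX : X.Nonempty) (ℓ : α → ℝ) :
    Hf X ℓ 0 = 0 := by
  have hn : (0:ℝ) < (X.card : ℝ) := by exact_mod_cast Finset.card_pos.mpr hX
  have hZ0 : Zf X ℓ 0 = (X.card : ℝ) := by simp [Zf]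
  apply Finset.sum_eq_zero
  intro x hx
  have hq : qf X ℓ 0 x = ((X.card : ℝ))⁻¹ := by
    rw [qf, hZ0]
    simp [one_div]
  rw [hq, div_self (inv_ne_zero hn.ne'), Real.log_one, mul_zero]

lemma Hf_nonneg {α : Type*} (X : Finset α) (hX : X.Nonempty) (ℓ : α → ℝ) (β : ℝ) :
    0 ≤ Hf X ℓ β :=
  entropy_nonneg X hX _ (fun x _ => qf_pos X hX ℓ β x) (qf_sum X hX ℓ β)

lemma Hf_identity {α : Type*} (X : Finset α) (hX : X.Nonempty) (ℓ : α → ℝ) (β : ℝ) :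
    Hf X ℓ β = β * (∑ x ∈ X, qf X ℓ β x * ℓ x) - Real.log (Zf X ℓ β)
      + Real.log ((X.card : ℝ)) := by
  have hn : (0:ℝ) < (X.card : ℝ) := by exact_mod_cast Finset.card_pos.mpr hX
  have hZ := Zf_pos X hX ℓ β
  have key : ∀ x ∈ X, qf X ℓ β x * Real.log (qf X ℓ β x / ((X.card : ℝ))⁻¹)
      = qf X ℓ β x * (β * ℓ x) - qf X ℓ β x * Real.log (Zf X ℓ β)
        + qf X ℓ β x * Real.log ((X.card : ℝ)) := by
    intro x hx
    have hlog : Real.log (qf X ℓ β x / ((X.card : ℝ))⁻¹)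
        = β * ℓ x - Real.log (Zf X ℓ β) + Real.log ((X.card : ℝ)) := by
      rw [Real.log_div (qf_pos X hX ℓ β x).ne' (inv_ne_zero hn.ne'), qf,
        Real.log_div (Real.exp_pos _).ne' hZ.ne', Real.log_exp, Real.log_inv]
      ring
    rw [hlog]; ring
  rw [Hf, Finset.sum_congr rfl key, Finset.sum_add_distrib, Finset.sum_sub_distrib,
    ← Finset.sum_mul, ← Finset.sum_mul, qf_sum X hX ℓ β, one_mul, one_mul]
  congr 2
  rw [Finset.mul_sum]
  exact Finset.sum_congr rfl (fun x _ => by ring)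

lemma dual_eq {α : Type*} (X : Finset α) (hX : X.Nonempty) (ℓ : α → ℝ) (β : ℝ)
    (hβ : 0 < β) (η : ℝ) :
    β⁻¹ * Real.log (∑ x ∈ X, ((X.card : ℝ))⁻¹ * Real.exp (ℓ x / β⁻¹)) + β⁻¹ * η
      = (∑ x ∈ X, qf X ℓ β x * ℓ x) + β⁻¹ * (η - Hf X ℓ β) := by
  have hn : (0:ℝ) < (X.card : ℝ) := by exact_mod_cast Finset.card_pos.mpr hX
  have hZ := Zf_pos X hX ℓ β
  have h1 : ∀ x ∈ X, ((X.card : ℝ))⁻¹ * Real.exp (ℓ x / β⁻¹)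
      = ((X.card : ℝ))⁻¹ * Real.exp (β * ℓ x) := by
    intro x _
    rw [show ℓ x / β⁻¹ = β * ℓ x by rw [div_eq_mul_inv, inv_inv, mul_comm]]
  rw [Finset.sum_congr rfl h1, ← Finset.mul_sum, ← Zf,
    Real.log_mul (inv_ne_zero hn.ne') hZ.ne', Real.log_inv]
  have h2 := Hf_identity X hX ℓ β
  have h3 : β⁻¹ * β = 1 := inv_mul_cancel₀ hβ.ne'
  have h4 : β⁻¹ * Hf X ℓ β = β⁻¹ * β * (∑ x ∈ X, qf X ℓ β x * ℓ x)
      - β⁻¹ * Real.log (Zf X ℓ β) + β⁻¹ * Real.log ((X.card : ℝ)) := by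
    rw [h2]; ring
  rw [h3, one_mul] at h4
  linarith [h4]

theorem kl_dro_duality {α : Type*} (X : Finset α) (hX : X.Nonempty)
    (ℓ : α → ℝ) (η : ℝ) (hη : 0 < η) :
    sSup {v : ℝ | ∃ Q : α → ℝ, (∀ x ∈ X, 0 ≤ Q x) ∧ (∑ x ∈ X, Q x = 1) ∧
        (∑ x ∈ X, Q x * Real.log (Q x / ((X.card : ℝ))⁻¹) ≤ η) ∧
        v = ∑ x ∈ X, Q x * ℓ x} =
      sInf {v : ℝ | ∃ τ : ℝ, 0 < τ ∧
        v = τ * Real.log (∑ x ∈ X, ((X.card : ℝ))⁻¹ * Real.exp (ℓ x / τ)) + τ * η} := by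
  have hn : (0:ℝ) < (X.card : ℝ) := by exact_mod_cast Finset.card_pos.mpr hX
  set S := {v : ℝ | ∃ Q : α → ℝ, (∀ x ∈ X, 0 ≤ Q x) ∧ (∑ x ∈ X, Q x = 1) ∧
        (∑ x ∈ X, Q x * Real.log (Q x / ((X.card : ℝ))⁻¹) ≤ η) ∧
        v = ∑ x ∈ X, Q x * ℓ x} with hS_def
  set T := {v : ℝ | ∃ τ : ℝ, 0 < τ ∧
        v = τ * Real.log (∑ x ∈ X, ((X.card : ℝ))⁻¹ * Real.exp (ℓ x / τ)) + τ * η} with hT_def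
  have hSne : S.Nonempty := by
    refine ⟨∑ x ∈ X, ((X.card:ℝ))⁻¹ * ℓ x, fun _ => ((X.card:ℝ))⁻¹,
      fun x _ => by positivity, ?_, ?_, rfl⟩
    · rw [Finset.sum_const, nsmul_eq_mul]; exact mul_inv_cancel₀ hn.ne'
    · have h0 : ∀ x ∈ X, ((X.card:ℝ))⁻¹ * Real.log (((X.card:ℝ))⁻¹ / ((X.card:ℝ))⁻¹) = 0 := by
        intro x _
        rw [div_self (inv_ne_zero hn.ne'), Real.log_one, mul_zero]
      rw [Finset.sum_congr rfl h0, Finset.sum_const, smul_zero]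
      exact hη.le
  have hTne : T.Nonempty := ⟨_, 1, one_pos, rfl⟩
  have weak : ∀ v ∈ S, ∀ t ∈ T, v ≤ t := by
    rintro v ⟨Q, hQ0, hQ1, hQKL, rfl⟩ t ⟨τ, hτ, rfl⟩
    have hg := gibbs_ineq X hX ℓ Q hQ0 hQ1 τ⁻¹
    have he : ∀ x ∈ X, ((X.card:ℝ))⁻¹ * Real.exp (ℓ x / τ)
        = ((X.card:ℝ))⁻¹ * Real.exp (τ⁻¹ * ℓ x) := by
      intro x _; rw [div_eq_inv_mul]
    rw [Finset.sum_congr rfl he]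
    have h4 := mul_le_mul_of_nonneg_left hg hτ.le
    rw [mul_add, ← mul_assoc, mul_inv_cancel₀ hτ.ne', one_mul] at h4
    have h5 : τ * (∑ x ∈ X, Q x * Real.log (Q x / ((X.card:ℝ))⁻¹)) ≤ τ * η :=
      mul_le_mul_of_nonneg_left hQKL hτ.le
    linarith
  obtain ⟨t₁, ht₁⟩ := hTne
  obtain ⟨v₀, hv₀⟩ := hSne
  have hbddS : BddAbove S := ⟨t₁, fun v hv => weak v hv t₁ ht₁⟩
  have hbddT : BddBelow T := ⟨v₀, fun t ht => weak v₀ hv₀ t ht⟩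
  have le1 : sSup S ≤ sInf T :=
    le_csInf ⟨t₁, ht₁⟩ fun t ht => csSup_le ⟨v₀, hv₀⟩ fun v hv => weak v hv t ht
  have le2 : sInf T ≤ sSup S := by
    by_cases hc : ∃ β > 0, η ≤ Hf X ℓ β
    · obtain ⟨β₀, hβ₀, hHβ₀⟩ := hc
      have hIVT := intermediate_value_Icc hβ₀.le (Hf_cont X hX ℓ).continuousOn
      have hmem : η ∈ Set.Icc (Hf X ℓ 0) (Hf X ℓ β₀) := by
        rw [Hf_zero X hX ℓ]; exact ⟨hη.le, hHβ₀⟩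
      obtain ⟨β, hβmem, hβη⟩ := hIVT hmem
      have hβpos : 0 < β := by
        rcases eq_or_lt_of_le hβmem.1 with h | h
        · exfalso; rw [← h, Hf_zero X hX ℓ] at hβη; linarith
        · exact h
      have hmemS : (∑ x ∈ X, qf X ℓ β x * ℓ x) ∈ S :=
        ⟨qf X ℓ β, fun x _ => (qf_pos X hX ℓ β x).le, qf_sum X hX ℓ β, le_of_eq hβη, rfl⟩
      have hmemT : (β⁻¹ * Real.log (∑ x ∈ X, ((X.card:ℝ))⁻¹ * Real.exp (ℓ x / β⁻¹))
          + β⁻¹ * η) ∈ T := ⟨β⁻¹, inv_pos.mpr hβpos, rfl⟩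
      calc sInf T ≤ β⁻¹ * Real.log (∑ x ∈ X, ((X.card:ℝ))⁻¹ * Real.exp (ℓ x / β⁻¹))
            + β⁻¹ * η := csInf_le hbddT hmemT
        _ = ∑ x ∈ X, qf X ℓ β x * ℓ x := by
            rw [dual_eq X hX ℓ β hβpos η, hβη]; simp
        _ ≤ sSup S := le_csSup hbddS hmemS
    · push_neg at hc
      apply le_of_forall_pos_le_add
      intro ε hε
      set β := η / ε with hβ_def
      have hβ : 0 < β := div_pos hη hε
      have h1 : sInf T ≤ β⁻¹ * Real.log (∑ x ∈ X, ((X.card:ℝ))⁻¹ * Real.exp (ℓ x / β⁻¹))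
          + β⁻¹ * η := csInf_le hbddT ⟨β⁻¹, inv_pos.mpr hβ, rfl⟩
      rw [dual_eq X hX ℓ β hβ η] at h1
      have h2 : (∑ x ∈ X, qf X ℓ β x * ℓ x) ≤ sSup S :=
        le_csSup hbddS ⟨qf X ℓ β, fun x _ => (qf_pos X hX ℓ β x).le, qf_sum X hX ℓ β,
          (hc β hβ).le, rfl⟩
      have h3 : β⁻¹ * (η - Hf X ℓ β) ≤ ε := by
        have hH := Hf_nonneg X hX ℓ β
        have hmono : β⁻¹ * (η - Hf X ℓ β) ≤ β⁻¹ * η :=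
          mul_le_mul_of_nonneg_left (by linarith) (inv_pos.mpr hβ).le
        have heq : β⁻¹ * η = ε := by
          rw [hβ_def, inv_div, div_mul_cancel₀ _ hη.ne']
        linarith
      linarith
  exact le_antisymm le1 le2
end
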